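/- Let d ≥ 3, t ≥ 1, and n ≥ 2t be integers, and let x = x_1...x_n and y = y_1...y_n be vertices of the undirected de Bruijn graph B(d,n) such that (x_1,...,x_{n-t}) ≠ (y_1,...,y_{n-t}). Then there exists a vertex a = a_1...a_n with a_{t+i} = x_i for all 1 ≤ i ≤ n-t such that d(x,a) ≤ t and d(y,a) > t; in particular B_t(x) ≠ B_t(y). -/

import Mathlib

/-- The undirected de Bruijn graph `B(d,n)`: vertices are strings of length `n`
over the alphabet `{0, ..., d-1}`, and two distinct strings `x`, `y` are adjacent
iff `x_{i+1} = y_i` for all valid `i`, or `y_{i+1} = x_i` for all valid `i`. -/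
def deBruijnGraph (d n : ℕ) : SimpleGraph (Fin n → Fin d) where
  Adj x y := x ≠ y ∧
    ((∀ i : Fin n, ∀ h : (i : ℕ) + 1 < n, x ⟨(i : ℕ) + 1, h⟩ = y i) ∨
     (∀ i : Fin n, ∀ h : (i : ℕ) + 1 < n, y ⟨(i : ℕ) + 1, h⟩ = x i))
  symm := ⟨fun x y ⟨hxy, h⟩ => ⟨hxy.symm, h.symm⟩⟩
  loopless := ⟨fun x ⟨hxx, _⟩ => hxx rfl⟩

/-- The ball of radius `t` around a vertex `x`. -/
def ball {V : Type*} (G : SimpleGraph V) (t : ℕ) (x : V) : Set V :=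
  {y | G.dist x y ≤ t}

/-- A set `S` of vertices is a `t`-identifying code if every ball of radius `t`
meets `S`, and distinct vertices have distinct identifying sets `B_t(x) ∩ S`. -/
def IsIdentifyingCode {V : Type*} (G : SimpleGraph V) (t : ℕ) (S : Set V) : Prop :=
  (∀ x : V, (ball G t x ∩ S).Nonempty) ∧
  ∀ x y : V, x ≠ y → ball G t x ∩ S ≠ ball G t y ∩ S

/-!
Every edge of the de Bruijn graph shifts a word by one place, so a walk of length `L` from `y`
to `a` has a net shift `s`, and the letters of `y` not pushed off either end during the walk
(all but `p` at the front and `q` at the back, where `2p + 2q ≤ L + |s|`) reappear in `a`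
shifted by `s`. The vertex `a = c_1 … c_t x_1 … x_{n-t}` is reached from `x` by `t` right
shifts. If `y` reached it within `t` steps, then either `s = t`, which forces
`y_1 … y_{n-t} = x_1 … x_{n-t}`, or `s < t`, in which case some letter `y_i` lands at a prefix
position `j` with `i + j ∈ {t-1, t}` (indices counted from `0`). Choosing each `c_j` different
from the two letters of `y` that can land on it, which is possible as `d ≥ 3`, rules this out.
-/

variable {d n : ℕ}

lemma exists_ne_ne_of_two_lt_card {α : Type*} [Fintype α] (h : 2 < Fintype.card α) (u v : α) :
    ∃ c, c ≠ u ∧ c ≠ v := by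
  classical
  obtain ⟨c, -, hc⟩ := Finset.exists_mem_notMem_of_card_lt_card
    (s := {u, v}) (t := Finset.univ) (Finset.card_le_two.trans_lt h)
  exact ⟨c, by simpa [not_or] using hc⟩

lemma deBruijnGraph_exists_walk_length_le_of_shift (k : ℕ) (z a : Fin n → Fin d)
    (h : ∀ i : Fin n, k ≤ (i : ℕ) → a i = z ⟨i - k, by omega⟩) :
    ∃ w : (deBruijnGraph d n).Walk z a, w.length ≤ k := by
  induction k generalizing a with
  | zero =>
    obtain rfl : a = z := funext fun i => by simpa using h i (Nat.zero_le _)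
    exact ⟨.nil, le_rfl⟩
  | succ k ih =>
    let b : Fin n → Fin d := fun i =>
      if hi : (i : ℕ) + 1 < n then a ⟨i + 1, hi⟩ else z ⟨i - k, by omega⟩
    have hba : ∀ i : Fin n, ∀ hi : (i : ℕ) + 1 < n, a ⟨i + 1, hi⟩ = b i := fun i hi => by
      simp [b, hi]
    have hzb : ∀ i : Fin n, k ≤ (i : ℕ) → b i = z ⟨i - k, by omega⟩ := by
      intro i hki
      by_cases hi : (i : ℕ) + 1 < n
      · rw [← hba i hi, h _ (by simp; omega)]
        congr 1
        ext
        simp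
      · simp [b, hi]
    obtain ⟨w, hw⟩ := ih b hzb
    by_cases hab : b = a
    · exact ⟨w.copy rfl hab, by simpa using hw.trans k.le_succ⟩
    · have hadj : (deBruijnGraph d n).Adj b a := ⟨hab, .inr hba⟩
      exact ⟨w.concat hadj, by rw [SimpleGraph.Walk.length_concat]; omega⟩

lemma deBruijnGraph_dist_le_of_shift (k : ℕ) (z a : Fin n → Fin d)
    (h : ∀ i : Fin n, k ≤ (i : ℕ) → a i = z ⟨i - k, by omega⟩) :
    (deBruijnGraph d n).dist z a ≤ k :=
  let ⟨w, hw⟩ := deBruijnGraph_exists_walk_length_le_of_shift k z a h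
  (SimpleGraph.dist_le w).trans hw

lemma deBruijnGraph_preconnected : (deBruijnGraph d n).Preconnected := fun z a =>
  let ⟨w, _⟩ :=
    deBruijnGraph_exists_walk_length_le_of_shift n z a fun i hi => absurd i.isLt (by omega)
  w.reachable

def AgreesShifted (y a : Fin n → Fin d) (s : ℤ) (p q : ℕ) : Prop :=
  ∀ i j : Fin n, (j : ℤ) = i + s → p ≤ (i : ℕ) → (i : ℕ) + q < n → a j = y i

namespace AgreesShifted

variable {y b a : Fin n → Fin d} {s : ℤ} {p q : ℕ}

lemma refl (y : Fin n → Fin d) : AgreesShifted y y 0 0 0 := fun i j hij _ _ => by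
  rw [Fin.ext (by omega : (j : ℕ) = i)]

lemma of_shiftLeft (hyb : ∀ i : Fin n, ∀ hi : (i : ℕ) + 1 < n, y ⟨i + 1, hi⟩ = b i)
    (hba : AgreesShifted b a s p q) : AgreesShifted y a (s - 1) (p + 1) (q - 1) := by
  intro i j hij hpi hiq
  have hyi : y i = b ⟨i - 1, by omega⟩ := by
    rw [← hyb _ (by simp; omega)]
    congr
    ext
    simp only
    omega
  rw [hyi]
  exact hba _ j (by simp; omega) (by simp; omega) (by simp; omega)

lemma of_shiftRight (hby : ∀ i : Fin n, ∀ hi : (i : ℕ) + 1 < n, b ⟨i + 1, hi⟩ = y i)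
    (hba : AgreesShifted b a s p q) : AgreesShifted y a (s + 1) (p - 1) (q + 1) := by
  intro i j hij hpi hiq
  rw [← hby i (by omega)]
  exact hba _ j (by simp; omega) (by simp; omega) (by simp; omega)

end AgreesShifted

/-- The net shift `s` of a walk and the numbers `p`, `q` of letters it pushes off the front and
the back: going out to shift `-p` and to shift `q` and ending at `s` takes at least
`2p + 2q - |s|` steps. -/
lemma exists_agreesShifted_of_walk {y a : Fin n → Fin d} (w : (deBruijnGraph d n).Walk y a) :
    ∃ s : ℤ, ∃ p q : ℕ, -(p : ℤ) ≤ s ∧ s ≤ q ∧ 2 * p + 2 * q ≤ w.length + s.natAbs ∧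
      AgreesShifted y a s p q := by
  induction w with
  | nil => exact ⟨0, 0, 0, le_rfl, le_rfl, le_rfl, .refl _⟩
  | cons h w ih =>
    obtain ⟨s, p, q, hps, hsq, hlen, hagree⟩ := ih
    rw [SimpleGraph.Walk.length_cons]
    rcases h.2 with hleft | hright
    · exact ⟨s - 1, p + 1, q - 1, by omega, by omega, by omega, hagree.of_shiftLeft hleft⟩
    · exact ⟨s + 1, p - 1, q + 1, by omega, by omega, by omega, hagree.of_shiftRight hright⟩

lemma deBruijnGraph_lt_dist_of_avoiding_prefix {t : ℕ} (hn : 2 * t ≤ n) {x y a : Fin n → Fin d}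
    (hxy : ∃ i : Fin n, (i : ℕ) + t < n ∧ x i ≠ y i)
    (hax : ∀ i : Fin n, t ≤ (i : ℕ) → a i = x ⟨i - t, by omega⟩)
    (hay : ∀ i j : Fin n, (j : ℕ) < t → ((i : ℕ) + j + 1 = t ∨ (i : ℕ) + j = t) → a j ≠ y i) :
    t < (deBruijnGraph d n).dist y a := by
  by_contra! hle
  obtain ⟨w, hw⟩ := (deBruijnGraph_preconnected y a).exists_walk_length_eq_dist
  obtain ⟨s, p, q, hps, hsq, hlen, hagree⟩ := exists_agreesShifted_of_walk w
  rw [hw] at hlen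
  rcases (show s = t ∨ s < t by omega) with rfl | hst
  · obtain ⟨i, hi, hne⟩ := hxy
    refine hne ?_
    rw [← hagree i ⟨i + t, hi⟩ (by simp) (by omega) (by omega), hax _ (by simp)]
    simp
  · -- `j = ⌊(t + s) / 2⌋` is the prefix position hit by the letter `y i` with `i + j ∈ {t-1, t}`.
    obtain ⟨i, j, hij, hj, hpi, hiq, hsum⟩ : ∃ i j : Fin n, (j : ℤ) = i + s ∧ (j : ℕ) < t ∧
        p ≤ (i : ℕ) ∧ (i : ℕ) + q < n ∧ ((i : ℕ) + j + 1 = t ∨ (i : ℕ) + j = t) :=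
      ⟨⟨((t - s) / 2).toNat, by omega⟩, ⟨((t + s) / 2).toNat, by omega⟩,
        by simp; omega, by simp; omega, by simp; omega, by simp; omega, by simp; omega⟩
    exact hay i j hj hsum (hagree i j hij hpi hiq)

def prependShift (t : ℕ) (c : Fin t → Fin d) (x : Fin n → Fin d) : Fin n → Fin d := fun i =>
  if h : (i : ℕ) < t then c ⟨i, h⟩ else x ⟨i - t, by omega⟩

theorem prefix_separation (d t n : ℕ) (hd : 3 ≤ d) (hn : 2 * t ≤ n)
    (x y : Fin n → Fin d)
    (hpre : ∃ i : ℕ, ∃ hi : i < n - t, x ⟨i, by omega⟩ ≠ y ⟨i, by omega⟩) :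
    (∃ a : Fin n → Fin d,
      (∀ i : ℕ, ∀ hi : i < n - t, a ⟨t + i, by omega⟩ = x ⟨i, by omega⟩) ∧
      (deBruijnGraph d n).dist x a ≤ t ∧
      t < (deBruijnGraph d n).dist y a) ∧
    ball (deBruijnGraph d n) t x ≠ ball (deBruijnGraph d n) t y := by
  choose c hc using fun j : Fin t =>
    exists_ne_ne_of_two_lt_card (α := Fin d) (by simp; omega)
      (y ⟨t - 1 - j, by omega⟩) (y ⟨t - j, by omega⟩)
  set a := prependShift t c x
  have hax : ∀ i : Fin n, t ≤ (i : ℕ) → a i = x ⟨i - t, by omega⟩ := fun i hi => by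
    simp [a, prependShift, hi.not_gt]
  have hxa : (deBruijnGraph d n).dist x a ≤ t := deBruijnGraph_dist_le_of_shift t x a hax
  have hya : t < (deBruijnGraph d n).dist y a := by
    refine deBruijnGraph_lt_dist_of_avoiding_prefix hn ?_ hax fun i j hj hsum => ?_
    · obtain ⟨i, hi, hne⟩ := hpre
      exact ⟨⟨i, by omega⟩, by simp; omega, hne⟩
    · have : a j = c ⟨j, hj⟩ := by simp [a, prependShift, hj]
      rcases hsum with hsum | hsum
      · rw [this, show i = ⟨t - 1 - j, by omega⟩ from Fin.ext (by simp only; omega)]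
        exact (hc _).1
      · rw [this, show i = ⟨t - j, by omega⟩ from Fin.ext (by simp only; omega)]
        exact (hc _).2
  refine ⟨⟨a, fun i hi => by simpa using hax ⟨t + i, by omega⟩ (by simp), hxa, hya⟩, fun h => ?_⟩
  exact (h ▸ hxa : a ∈ ball (deBruijnGraph d n) t y).not_gt hya
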